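/- A subset A of a group G is sparse if and only if for every free ultrafilter p on G, the set Δ_p(A) = {g ∈ G : A ∈ g·p} is finite. -/

import Mathlib

open Pointwise

def Sparse {G : Type*} [Group G] (A : Set G) : Prop :=
  ∀ X : Set G, X.Infinite → ∃ F : Finset G, F.Nonempty ∧ ↑F ⊆ X ∧
    (⋂ g ∈ F, (g • A : Set G)).Finite

def companion {G : Type*} [Group G] (p : Ultrafilter G) (A : Set G) : Set G :=
  {g : G | (g⁻¹ • A : Set G) ∈ p}

/-!
If `A` is sparse and `Δ_p(A)` were infinite, sparseness applied to `Δ_p(A)⁻¹` would give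
finitely many translates `g • A`, all in `p`, with finite intersection, contradicting freeness
of `p`. Conversely, if an infinite `X` witnesses that `A` is not sparse, the translates `g • A`,
`g ∈ X`, together with the cofinite sets have the finite intersection property; an ultrafilter
containing them all is free, and `X⁻¹ ⊆ Δ_p(A)`.
-/

open Filter

theorem Ultrafilter.infinite_of_mem_of_le_cofinite {α : Type*} {p : Ultrafilter α}
    (hp : (p : Filter α) ≤ cofinite) {S : Set α} (hS : S ∈ p) : S.Infinite :=
  fun hfin => Ultrafilter.compl_notMem_iff.2 hS (hp hfin.compl_mem_cofinite)

section

variable {G : Type*} [Group G]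

theorem mem_inv_companion {p : Ultrafilter G} {A : Set G} {g : G} :
    g ∈ (companion p A)⁻¹ ↔ g • A ∈ p := by
  simp [companion]

theorem Sparse.companion_finite {A : Set G} (hA : Sparse A) {p : Ultrafilter G}
    (hp : ∀ S ∈ p, S.Infinite) : (companion p A).Finite := by
  rw [← Set.finite_inv]
  by_contra hinf
  obtain ⟨F, -, hFX, hfin⟩ := hA _ hinf
  exact hp _ ((biInter_finset_mem F).2 fun g hg => mem_inv_companion.1 (hFX hg)) hfin

theorem cofinite_inf_biInf_principal_smul_neBot [Infinite G] {A X : Set G}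
    (hX : ∀ F : Finset G, F.Nonempty → ↑F ⊆ X → (⋂ g ∈ F, g • A).Infinite) :
    (cofinite ⊓ ⨅ g ∈ X, 𝓟 (g • A)).NeBot := by
  rw [neBot_iff, Ne, ← disjoint_iff, disjoint_cofinite_left]
  rintro ⟨t, ht, htfin⟩
  obtain ⟨I, hIfin, hIX, hIt⟩ := mem_biInf_principal.1 ht
  refine (?_ : (⋂ g ∈ I, g • A).Infinite) (htfin.subset hIt)
  rcases I.eq_empty_or_nonempty with rfl | hI
  · simpa using Set.infinite_univ
  · simpa using hX hIfin.toFinset (by simpa) (by simpa)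

theorem exists_ultrafilter_le_cofinite_companion_infinite [Infinite G] {A : Set G}
    (hA : ¬Sparse A) :
    ∃ p : Ultrafilter G, (p : Filter G) ≤ cofinite ∧ (companion p A).Infinite := by
  simp only [Sparse, not_forall, not_exists, not_and, Set.not_finite] at hA
  obtain ⟨X, hXinf, hX⟩ := hA
  have := cofinite_inf_biInf_principal_smul_neBot hX
  obtain ⟨p, hp⟩ := exists_ultrafilter_le (cofinite ⊓ ⨅ g ∈ X, 𝓟 (g • A))
  refine ⟨p, hp.trans inf_le_left, Set.infinite_inv.1 (hXinf.mono fun g hg => ?_)⟩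
  exact mem_inv_companion.2 <|
    hp.trans (inf_le_right.trans (iInf₂_le g hg)) (mem_principal_self _)

end

/-- `A` is sparse iff `Δ_p(A)` is finite for every free ultrafilter `p`. -/
theorem sparse_iff_companions_finite {G : Type*} [Group G] [Infinite G] (A : Set G) :
    Sparse A ↔
      ∀ p : Ultrafilter G, (∀ S ∈ p, (S : Set G).Infinite) →
        (companion p A).Finite := by
  refine ⟨fun hA p hp => hA.companion_finite hp, fun h => ?_⟩
  by_contra hA
  obtain ⟨p, hp, hinf⟩ := exists_ultrafilter_le_cofinite_companion_infinite hA
  exact hinf (h p fun S hS => p.infinite_of_mem_of_le_cofinite hp hS)
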